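/- The normalized sinc function satisfies Σ over all integers q of sinc(q − x)² = 1 for every real x. -/

import Mathlib

noncomputable def nsinc (x : ℝ) : ℝ :=
  if x = 0 then 1 else Real.sin (Real.pi * x) / (Real.pi * x)

/-!
The `n`-th Fourier coefficient of `t ↦ exp (2πixt)` on `[0, 1]` is `exp (-πi(n - x)) sinc (n - x)`,
so Parseval's identity turns `∫₀¹ |exp (2πixt)|² dt = 1` into the claim.
-/

open Complex Real MeasureTheory

lemma integral_exp_neg_two_pi_I_mul (r : ℝ) :
    ∫ t in (0 : ℝ)..1, cexp (-2 * π * I * r * t) = cexp (-π * r * I) * nsinc r := by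
  rcases eq_or_ne r 0 with rfl | hr
  · simp [nsinc]
  have hc : -2 * π * I * r ≠ 0 := by simp [hr, pi_ne_zero]
  have hsq : cexp (-2 * π * I * r * 1) = cexp (-π * r * I) ^ 2 := by
    rw [← Complex.exp_nat_mul]; ring_nf
  rw [integral_exp_mul_complex hc, nsinc, if_neg hr]
  push_cast
  rw [hsq, mul_zero, Complex.exp_zero, Complex.sin]
  simp only [neg_mul, Complex.exp_neg]
  field_simp
  rw [I_sq]
  ring

lemma norm_integral_exp_neg_two_pi_I_mul (r : ℝ) :
    ‖∫ t in (0 : ℝ)..1, cexp (-2 * π * I * r * t)‖ = |nsinc r| := by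
  rw [integral_exp_neg_two_pi_I_mul, norm_mul, Complex.norm_exp]
  simp

lemma norm_exp_two_pi_I_mul (x t : ℝ) : ‖cexp (2 * π * I * x * t)‖ = 1 := by
  simp [Complex.norm_exp]

lemma fourierCoeffOn_exp_two_pi_I_mul (x : ℝ) (n : ℤ) :
    fourierCoeffOn zero_lt_one (fun t : ℝ => cexp (2 * π * I * x * t)) n =
      ∫ t in (0 : ℝ)..1, cexp (-2 * π * I * (n - x : ℝ) * t) := by
  rw [fourierCoeffOn_eq_integral, sub_zero, div_one, one_smul]
  congr 1 with t
  rw [fourier_coe_apply, smul_eq_mul, ← Complex.exp_add]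
  congr 1
  push_cast
  ring

/-- `Σ_{q ∈ ℤ} sinc(q − x)² = 1` for every real `x`. -/
theorem sum_sinc_sq_eq_one (x : ℝ) :
    ∑' q : ℤ, (nsinc ((q : ℝ) - x)) ^ 2 = 1 := by
  have hL2 : MemLp (fun t : ℝ => cexp (2 * π * I * x * t)) 2 (volume.restrict (Set.Ioc 0 1)) :=
    .of_bound (by fun_prop) 1 (.of_forall fun t => (norm_exp_two_pi_I_mul x t).le)
  have parseval := tsum_sq_fourierCoeffOn zero_lt_one hL2
  simp only [fourierCoeffOn_exp_two_pi_I_mul, norm_integral_exp_neg_two_pi_I_mul, sq_abs,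
    norm_exp_two_pi_I_mul] at parseval
  rw [parseval]
  norm_num
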